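/- Let 1 ≤ d ≤ p. There exist a constant C > 0 and a nonempty subset U of G(p,d) := {AAᵀ : A is a p×d real matrix with AᵀA = I_d}, relatively open in G(p,d) (viewed as a subset of the space of p×p real matrices with the Frobenius norm topology), such that for every n and every u₁, ..., u_n ∈ U there exist p×d matrices A₁, ..., A_n with AᵢᵀAᵢ = I_d and AᵢAᵢᵀ = uᵢ for each i, and ‖Aᵢ − Aⱼ‖_F ≤ C ‖uᵢ − uⱼ‖_F for all i, j. -/
import Mathlib


open Matrix

/-- Frobenius norm of a real matrix: `‖M‖_F = (tr (M Mᵀ))^{1/2}`. -/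
noncomputable def frobNorm {m n : Type*} [Fintype m] [Fintype n]
    (M : Matrix m n ℝ) : ℝ :=
  Real.sqrt (Matrix.trace (M * Mᵀ))

/-- The Grassmannian `G(p,d)`, viewed as the set of matrices `AAᵀ` for `p×d` matrices `A`
with orthonormal columns (i.e. the rank-`d` orthogonal projection matrices). -/
def grassmannian (p d : ℕ) : Set (Matrix (Fin p) (Fin p) ℝ) :=
  {u | ∃ A : Matrix (Fin p) (Fin d) ℝ, Aᵀ * A = 1 ∧ A * Aᵀ = u}

section frob
variable {m n k : Type*} [Fintype m] [Fintype n] [Fintype k]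

lemma frobNorm_eq (M : Matrix m n ℝ) :
    frobNorm M = Real.sqrt (∑ i, ∑ j, (M i j)^2) := by
  rw [frobNorm]; congr 1
  simp [Matrix.trace, Matrix.mul_apply, Matrix.diag, sq]

lemma frobNorm_nonneg (M : Matrix m n ℝ) : 0 ≤ frobNorm M := Real.sqrt_nonneg _

lemma frobNorm_sq (M : Matrix m n ℝ) :
    frobNorm M ^ 2 = ∑ i, ∑ j, (M i j)^2 := by
  rw [frobNorm_eq, Real.sq_sqrt]; positivity

lemma frobNorm_neg (M : Matrix m n ℝ) : frobNorm (-M) = frobNorm M := by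
  simp [frobNorm_eq]

lemma frobNorm_sub_rev (M N : Matrix m n ℝ) : frobNorm (M - N) = frobNorm (N - M) := by
  rw [← frobNorm_neg (M - N), neg_sub]

lemma frob_inner_le (M N : Matrix m n ℝ) :
    ∑ i, ∑ j, M i j * N i j ≤ frobNorm M * frobNorm N := by
  have h := Finset.sum_mul_sq_le_sq_mul_sq Finset.univ
    (fun x : m × n => M x.1 x.2) (fun x : m × n => N x.1 x.2)
  have e1 : ∑ x : m × n, M x.1 x.2 * N x.1 x.2 = ∑ i, ∑ j, M i j * N i j :=
    Fintype.sum_prod_type _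
  have e2 : ∑ x : m × n, (M x.1 x.2)^2 = ∑ i, ∑ j, (M i j)^2 := Fintype.sum_prod_type _
  have e3 : ∑ x : m × n, (N x.1 x.2)^2 = ∑ i, ∑ j, (N i j)^2 := Fintype.sum_prod_type _
  rw [e1, e2, e3, ← frobNorm_sq, ← frobNorm_sq] at h
  have hS : (∑ i, ∑ j, M i j * N i j) ≤ |∑ i, ∑ j, M i j * N i j| := le_abs_self _
  calc (∑ i, ∑ j, M i j * N i j) ≤ |∑ i, ∑ j, M i j * N i j| := hS
    _ = Real.sqrt ((∑ i, ∑ j, M i j * N i j)^2) := (Real.sqrt_sq_eq_abs _).symm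
    _ ≤ Real.sqrt (frobNorm M ^2 * frobNorm N ^2) := Real.sqrt_le_sqrt h
    _ = frobNorm M * frobNorm N := by
        rw [← mul_pow, Real.sqrt_sq (mul_nonneg (frobNorm_nonneg M) (frobNorm_nonneg N))]

lemma frobNorm_add_le (M N : Matrix m n ℝ) :
    frobNorm (M + N) ≤ frobNorm M + frobNorm N := by
  have h1 := frob_inner_le M N
  have hM := frobNorm_nonneg M
  have hN := frobNorm_nonneg N
  rw [frobNorm_eq]
  have hle : ∑ i, ∑ j, ((M + N) i j)^2 ≤ (frobNorm M + frobNorm N)^2 := by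
    have eM : ∑ i, ∑ j, (M i j)^2 = frobNorm M ^ 2 := (frobNorm_sq M).symm
    have eN : ∑ i, ∑ j, (N i j)^2 = frobNorm N ^ 2 := (frobNorm_sq N).symm
    have expand : ∑ i, ∑ j, ((M + N) i j)^2
        = (∑ i, ∑ j, (M i j)^2) + 2 * (∑ i, ∑ j, M i j * N i j) + (∑ i, ∑ j, (N i j)^2) := by
      simp only [Matrix.add_apply, add_sq, Finset.sum_add_distrib, Finset.mul_sum]
      simp [mul_assoc]
    rw [expand, eM, eN]; nlinarith
  calc Real.sqrt (∑ i, ∑ j, ((M + N) i j)^2) ≤ Real.sqrt ((frobNorm M + frobNorm N)^2) :=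
        Real.sqrt_le_sqrt hle
    _ = frobNorm M + frobNorm N := Real.sqrt_sq (by positivity)

lemma frobNorm_mul_le (M : Matrix m n ℝ) (N : Matrix n k ℝ) :
    frobNorm (M * N) ≤ frobNorm M * frobNorm N := by
  have key : ∑ i, ∑ j, ((M * N) i j)^2 ≤ (∑ i, ∑ j, (M i j)^2) * (∑ i, ∑ j, (N i j)^2) := by
    have h : ∀ (i : m) (j : k), ((M * N) i j)^2 ≤ (∑ l, (M i l)^2) * (∑ l, (N l j)^2) := by
      intro i j
      rw [Matrix.mul_apply]
      exact Finset.sum_mul_sq_le_sq_mul_sq Finset.univ _ _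
    calc ∑ i, ∑ j, ((M * N) i j)^2 ≤ ∑ i : m, ∑ j : k, (∑ l, (M i l)^2) * (∑ l, (N l j)^2) := by
          apply Finset.sum_le_sum; intro i _; apply Finset.sum_le_sum; intro j _; exact h i j
      _ = (∑ i, ∑ l, (M i l)^2) * (∑ j : k, ∑ l, (N l j)^2) := by
          rw [Finset.sum_mul_sum]
      _ = (∑ i, ∑ j, (M i j)^2) * (∑ i, ∑ j, (N i j)^2) := by
          congr 1
          exact Finset.sum_comm
  rw [frobNorm_eq, frobNorm_eq, frobNorm_eq, ← Real.sqrt_mul (by positivity)]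
  exact Real.sqrt_le_sqrt key

lemma frob_conj [DecidableEq m] [DecidableEq n] {P : Matrix m m ℝ} {Q : Matrix n n ℝ} (M : Matrix m n ℝ)
    (hP : P * Pᵀ = 1) (hQ : Q * Qᵀ = 1) :
    frobNorm (Pᵀ * M * Q) = frobNorm M := by
  unfold frobNorm
  congr 1
  have : (Pᵀ * M * Q) * (Pᵀ * M * Q)ᵀ = Pᵀ * (M * Mᵀ) * P := by
    simp only [Matrix.transpose_mul, Matrix.transpose_transpose]
    calc Pᵀ * M * Q * (Qᵀ * (Mᵀ * P)) = Pᵀ * M * (Q * Qᵀ) * (Mᵀ * P) := by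
          simp only [Matrix.mul_assoc]
      _ = Pᵀ * (M * Mᵀ) * P := by rw [hQ, Matrix.mul_one]; simp only [Matrix.mul_assoc]
  rw [this, Matrix.trace_mul_cycle, ← Matrix.mul_assoc, hP, Matrix.one_mul]

lemma frobNorm_diagonal [DecidableEq m] (w : m → ℝ) :
    frobNorm (Matrix.diagonal w) = Real.sqrt (∑ i, (w i)^2) := by
  unfold frobNorm
  rw [Matrix.diagonal_transpose, Matrix.diagonal_mul_diagonal, Matrix.trace_diagonal]
  simp [sq]

lemma abs_le_frobNorm_diagonal [DecidableEq m] (w : m → ℝ) (i : m) :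
    |w i| ≤ frobNorm (Matrix.diagonal w) := by
  rw [frobNorm_diagonal, ← Real.sqrt_sq_eq_abs]
  apply Real.sqrt_le_sqrt
  exact Finset.single_le_sum (f := fun i => (w i)^2) (fun i _ => sq_nonneg _) (Finset.mem_univ i)

end frob

section spec
variable {d : ℕ}

/-- Spectral decomposition over ℝ, packaged. -/
lemma real_spectral {X : Matrix (Fin d) (Fin d) ℝ} (hX : X.IsHermitian) :
    ∃ (W : Matrix (Fin d) (Fin d) ℝ) (e : Fin d → ℝ),
      Wᵀ * W = 1 ∧ W * Wᵀ = 1 ∧ X = W * Matrix.diagonal e * Wᵀ ∧ e = hX.eigenvalues ∧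
      W = (Matrix.IsHermitian.eigenvectorUnitary hX : Matrix (Fin d) (Fin d) ℝ) := by
  refine ⟨(Matrix.IsHermitian.eigenvectorUnitary hX : Matrix (Fin d) (Fin d) ℝ), hX.eigenvalues,
    ?_, ?_, ?_, rfl, rfl⟩
  · have := (Matrix.IsHermitian.eigenvectorUnitary hX).2
    rw [Unitary.mem_iff] at this
    have h1 := this.1
    simpa [Matrix.star_eq_conjTranspose, Matrix.conjTranspose_eq_transpose_of_trivial] using h1
  · have := (Matrix.IsHermitian.eigenvectorUnitary hX).2
    rw [Unitary.mem_iff] at this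
    have h2 := this.2
    simpa [Matrix.star_eq_conjTranspose, Matrix.conjTranspose_eq_transpose_of_trivial] using h2
  · have := hX.spectral_theorem
    simpa [Matrix.star_eq_conjTranspose, Matrix.conjTranspose_eq_transpose_of_trivial,
      RCLike.ofReal_real_eq_id] using this

end spec

section isq
variable {d : ℕ}

open Classical in
/-- inverse square root of a symmetric positive definite matrix (junk value otherwise) -/
noncomputable def isq (X : Matrix (Fin d) (Fin d) ℝ) : Matrix (Fin d) (Fin d) ℝ :=
  if hX : X.IsHermitian then
    (Matrix.IsHermitian.eigenvectorUnitary hX : Matrix (Fin d) (Fin d) ℝ)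
      * Matrix.diagonal (fun i => (Real.sqrt (hX.eigenvalues i))⁻¹)
      * (Matrix.IsHermitian.eigenvectorUnitary hX : Matrix (Fin d) (Fin d) ℝ)ᵀ
  else 1

lemma conj_mul_conj {n : Type*} [Fintype n] [DecidableEq n] {W : Matrix n n ℝ}
    (h1 : Wᵀ * W = 1) (a b : n → ℝ) :
    (W * Matrix.diagonal a * Wᵀ) * (W * Matrix.diagonal b * Wᵀ)
      = W * Matrix.diagonal (fun i => a i * b i) * Wᵀ := by
  calc (W * Matrix.diagonal a * Wᵀ) * (W * Matrix.diagonal b * Wᵀ)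
      = W * Matrix.diagonal a * (Wᵀ * W) * (Matrix.diagonal b * Wᵀ) := by
        simp only [Matrix.mul_assoc]
    _ = W * (Matrix.diagonal a * Matrix.diagonal b) * Wᵀ := by
        rw [h1, Matrix.mul_one]; simp only [Matrix.mul_assoc]
    _ = W * Matrix.diagonal (fun i => a i * b i) * Wᵀ := by
        rw [Matrix.diagonal_mul_diagonal]

lemma frob_conj' {n : Type*} [Fintype n] [DecidableEq n] {W : Matrix n n ℝ}
    (h1 : Wᵀ * W = 1) (h2 : W * Wᵀ = 1) (a : n → ℝ) :
    frobNorm (W * Matrix.diagonal a * Wᵀ) = Real.sqrt (∑ i, (a i)^2) := by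
  have := frob_conj (P := Wᵀ) (Q := Wᵀ) (Matrix.diagonal a)
    (by rwa [Matrix.transpose_transpose]) (by rwa [Matrix.transpose_transpose])
  rw [Matrix.transpose_transpose] at this
  rw [this, frobNorm_diagonal]

/-- everything we need about `isq X`. -/
lemma isq_spec (X : Matrix (Fin d) (Fin d) ℝ) (hX : X.IsHermitian)
    (hb : frobNorm (X - 1) ≤ 1/2) :
    ∃ (W : Matrix (Fin d) (Fin d) ℝ) (a : Fin d → ℝ),
      Wᵀ * W = 1 ∧ W * Wᵀ = 1 ∧
      (∀ i, 1/2 ≤ a i ∧ (a i)^2 ≤ 2) ∧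
      isq X = W * Matrix.diagonal a * Wᵀ ∧
      isq X * X * isq X = 1 ∧
      X * (isq X * isq X) = 1 ∧
      (isq X * isq X) * X = 1 ∧
      frobNorm (isq X) ≤ Real.sqrt (2*d) ∧
      frobNorm (isq X * isq X) ≤ 2 * Real.sqrt d := by
  obtain ⟨W, e, h1, h2, hXdef, heig, hWdef⟩ := real_spectral hX
  set a : Fin d → ℝ := fun i => (Real.sqrt (e i))⁻¹ with ha
  have hisq : isq X = W * Matrix.diagonal a * Wᵀ := by
    rw [isq, dif_pos hX, ← hWdef, ← heig]
  -- eigenvalue bounds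
  have hXsub : X - 1 = W * Matrix.diagonal (fun i => e i - 1) * Wᵀ := by
    have h1' : (1 : Matrix (Fin d) (Fin d) ℝ) = W * Matrix.diagonal (fun _ => (1:ℝ)) * Wᵀ := by
      rw [Matrix.diagonal_one, Matrix.mul_one, h2]
    rw [hXdef]
    nth_rewrite 1 [h1']
    rw [← Matrix.sub_mul, ← Matrix.mul_sub, ← Matrix.diagonal_sub]
  have he : ∀ i, 1/2 ≤ e i ∧ e i ≤ 3/2 := by
    intro i
    have habs : |e i - 1| ≤ 1/2 := by
      calc |e i - 1| ≤ frobNorm (Matrix.diagonal (fun j => e j - 1)) :=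
            abs_le_frobNorm_diagonal (fun j => e j - 1) i
        _ = frobNorm (X - 1) := by rw [hXsub, frob_conj' h1 h2, frobNorm_diagonal]
        _ ≤ 1/2 := hb
    rw [abs_le] at habs
    constructor <;> linarith [habs.1, habs.2]
  have hepos : ∀ i, (0:ℝ) < e i := fun i => by linarith [(he i).1]
  have haa : ∀ i, a i * a i = (e i)⁻¹ := by
    intro i
    rw [ha, ← mul_inv, Real.mul_self_sqrt (le_of_lt (hepos i))]
  have habound : ∀ i, 1/2 ≤ a i ∧ (a i)^2 ≤ 2 := by
    intro i
    have hpos : 0 < Real.sqrt (e i) := Real.sqrt_pos.mpr (hepos i)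
    have ha0 : 0 ≤ a i := inv_nonneg.mpr (Real.sqrt_nonneg _)
    have hinv : a i * Real.sqrt (e i) = 1 := inv_mul_cancel₀ hpos.ne'
    have h4 : Real.sqrt 4 = 2 := by
      rw [show (4:ℝ) = 2^2 by norm_num, Real.sqrt_sq (by norm_num)]
    have h2' : Real.sqrt (e i) ≤ 2 := by
      rw [← h4]; exact Real.sqrt_le_sqrt (by linarith [(he i).2])
    constructor
    · nlinarith [mul_nonneg ha0 (sub_nonneg.mpr h2')]
    · rw [sq, haa i]
      have := mul_inv_cancel₀ (hepos i).ne'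
      nlinarith [(he i).1, inv_nonneg.mpr (le_of_lt (hepos i))]
  have hone : ∀ (f : Fin d → ℝ), (∀ i, f i = 1) →
      W * Matrix.diagonal f * Wᵀ = 1 := by
    intro f hf
    have : f = fun _ => (1:ℝ) := funext hf
    rw [this, Matrix.diagonal_one, Matrix.mul_one, h2]
  refine ⟨W, a, h1, h2, habound, hisq, ?_, ?_, ?_, ?_, ?_⟩
  · rw [hisq, hXdef, conj_mul_conj h1, conj_mul_conj h1]
    apply hone
    intro i
    have := inv_mul_cancel₀ (hepos i).ne'
    calc a i * e i * a i = a i * a i * e i := by ring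
      _ = (e i)⁻¹ * e i := by rw [haa i]
      _ = 1 := this
  · rw [hisq, hXdef, conj_mul_conj h1, conj_mul_conj h1]
    apply hone
    intro i
    rw [haa i]
    exact mul_inv_cancel₀ (hepos i).ne'
  · rw [hisq, hXdef, conj_mul_conj h1, conj_mul_conj h1]
    apply hone
    intro i
    rw [haa i]
    exact inv_mul_cancel₀ (hepos i).ne'
  · rw [hisq, frob_conj' h1 h2]
    have : ∑ i, (a i)^2 ≤ 2 * d := by
      calc ∑ i, (a i)^2 ≤ ∑ _i : Fin d, (2:ℝ) :=
            Finset.sum_le_sum (fun i _ => (habound i).2)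
        _ = 2 * d := by simp [mul_comm]
    exact Real.sqrt_le_sqrt this
  · rw [hisq, conj_mul_conj h1, frob_conj' h1 h2]
    have hsum : ∑ i, (a i * a i)^2 ≤ 4 * d := by
      calc ∑ i, (a i * a i)^2 ≤ ∑ _i : Fin d, (4:ℝ) := by
            apply Finset.sum_le_sum
            intro i _
            have h := (habound i).2
            have h0 : 0 ≤ (a i)^2 := sq_nonneg _
            nlinarith
        _ = 4 * d := by simp [mul_comm]
    calc Real.sqrt (∑ i, (a i * a i)^2) ≤ Real.sqrt (4 * d) := Real.sqrt_le_sqrt hsum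
      _ = 2 * Real.sqrt d := by
          rw [show (4:ℝ) = 2^2 by norm_num, Real.sqrt_mul (by positivity),
            Real.sqrt_sq (by norm_num)]

end isq

section sylvester
variable {d : ℕ}

lemma sylvester {S T U V : Matrix (Fin d) (Fin d) ℝ} {a b : Fin d → ℝ}
    (hU1 : Uᵀ * U = 1) (hU2 : U * Uᵀ = 1) (hV1 : Vᵀ * V = 1) (hV2 : V * Vᵀ = 1)
    (ha : ∀ i, 1/2 ≤ a i) (hb : ∀ i, 1/2 ≤ b i)
    (hS : S = U * Matrix.diagonal a * Uᵀ) (hT : T = V * Matrix.diagonal b * Vᵀ) :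
    frobNorm (S - T) ≤ frobNorm (S * S - T * T) := by
  set D := Uᵀ * (S - T) * V with hD
  set Δ := Uᵀ * (S * S - T * T) * V with hΔ
  have hUS : Uᵀ * S = Matrix.diagonal a * Uᵀ := by
    rw [hS]
    calc Uᵀ * (U * Matrix.diagonal a * Uᵀ) = (Uᵀ * U) * (Matrix.diagonal a * Uᵀ) := by
          simp only [Matrix.mul_assoc]
      _ = Matrix.diagonal a * Uᵀ := by rw [hU1, Matrix.one_mul]
  have hTV : T * V = V * Matrix.diagonal b := by
    rw [hT]
    calc V * Matrix.diagonal b * Vᵀ * V = V * Matrix.diagonal b * (Vᵀ * V) := by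
          simp only [Matrix.mul_assoc]
      _ = V * Matrix.diagonal b := by rw [hV1, Matrix.mul_one]
  have hΔeq : Δ = Matrix.diagonal a * D + D * Matrix.diagonal b := by
    have hsplit : S * S - T * T = S * (S - T) + (S - T) * T := by
      rw [Matrix.mul_sub, Matrix.sub_mul]
      abel
    rw [hΔ, hsplit, Matrix.mul_add, Matrix.add_mul]
    congr 1
    · rw [hD]
      calc Uᵀ * (S * (S - T)) * V = (Uᵀ * S) * ((S - T) * V) := by simp only [Matrix.mul_assoc]
        _ = Matrix.diagonal a * Uᵀ * ((S - T) * V) := by rw [hUS]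
        _ = Matrix.diagonal a * (Uᵀ * (S - T) * V) := by simp only [Matrix.mul_assoc]
    · rw [hD]
      calc Uᵀ * ((S - T) * T) * V = Uᵀ * (S - T) * (T * V) := by simp only [Matrix.mul_assoc]
        _ = Uᵀ * (S - T) * (V * Matrix.diagonal b) := by rw [hTV]
        _ = Uᵀ * (S - T) * V * Matrix.diagonal b := by simp only [Matrix.mul_assoc]
  have hentry : ∀ i j, (D i j)^2 ≤ (Δ i j)^2 := by
    intro i j
    have : Δ i j = (a i + b j) * D i j := by
      rw [hΔeq]
      simp [Matrix.add_apply, Matrix.diagonal_mul, Matrix.mul_diagonal]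
      ring
    rw [this, mul_pow]
    have hab : 1 ≤ a i + b j := by linarith [ha i, hb j]
    have h1 : 1 ≤ (a i + b j)^2 := by nlinarith
    nlinarith [sq_nonneg (D i j), mul_le_mul_of_nonneg_right h1 (sq_nonneg (D i j))]
  have hsum : ∑ i, ∑ j, (D i j)^2 ≤ ∑ i, ∑ j, (Δ i j)^2 :=
    Finset.sum_le_sum fun i _ => Finset.sum_le_sum fun j _ => hentry i j
  have hDnorm : frobNorm D = frobNorm (S - T) := frob_conj _ hU2 hV2
  have hΔnorm : frobNorm Δ = frobNorm (S * S - T * T) := frob_conj _ hU2 hV2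
  rw [← hDnorm, ← hΔnorm, frobNorm_eq, frobNorm_eq]
  exact Real.sqrt_le_sqrt hsum

/-- Lipschitz bound for `isq`. -/
lemma isq_diff {X Y : Matrix (Fin d) (Fin d) ℝ} (hX : X.IsHermitian) (hY : Y.IsHermitian)
    (hbX : frobNorm (X - 1) ≤ 1/2) (hbY : frobNorm (Y - 1) ≤ 1/2) :
    frobNorm (isq X - isq Y) ≤ 4 * d * frobNorm (X - Y) := by
  obtain ⟨U, a, hU1, hU2, haB, hisqX, -, hXP, hPX, -, hPn⟩ := isq_spec X hX hbX
  obtain ⟨V, b, hV1, hV2, hbB, hisqY, -, hYQ, hQY, -, hQn⟩ := isq_spec Y hY hbY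
  set P := isq X * isq X with hP
  set Q := isq Y * isq Y with hQ
  have step1 : frobNorm (isq X - isq Y) ≤ frobNorm (P - Q) :=
    sylvester hU1 hU2 hV1 hV2 (fun i => (haB i).1) (fun i => (hbB i).1) hisqX hisqY
  have hPQ : P - Q = P * (Y - X) * Q := by
    symm
    calc P * (Y - X) * Q = P * (Y * Q) - (P * X) * Q := by
          rw [Matrix.mul_sub, Matrix.sub_mul]; simp only [Matrix.mul_assoc]
      _ = P - Q := by rw [hYQ, hPX, Matrix.mul_one, Matrix.one_mul]
  have step2 : frobNorm (P - Q) ≤ (2 * Real.sqrt d) * frobNorm (X - Y) * (2 * Real.sqrt d) := by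
    rw [hPQ]
    have hYX : frobNorm (Y - X) = frobNorm (X - Y) := frobNorm_sub_rev _ _
    calc frobNorm (P * (Y - X) * Q) ≤ frobNorm (P * (Y - X)) * frobNorm Q :=
          frobNorm_mul_le _ _
      _ ≤ frobNorm P * frobNorm (Y - X) * frobNorm Q := by
          apply mul_le_mul_of_nonneg_right (frobNorm_mul_le _ _) (frobNorm_nonneg _)
      _ ≤ (2 * Real.sqrt d) * frobNorm (X - Y) * (2 * Real.sqrt d) := by
          rw [hYX]
          apply mul_le_mul
          · exact mul_le_mul_of_nonneg_right hPn (frobNorm_nonneg _)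
          · exact hQn
          · exact frobNorm_nonneg _
          · exact mul_nonneg (by positivity) (frobNorm_nonneg _)
  calc frobNorm (isq X - isq Y) ≤ (2 * Real.sqrt d) * frobNorm (X - Y) * (2 * Real.sqrt d) :=
        le_trans step1 step2
    _ = (4 * (Real.sqrt d * Real.sqrt d)) * frobNorm (X - Y) := by ring
    _ = 4 * d * frobNorm (X - Y) := by
        rw [Real.mul_self_sqrt (by positivity)]

end sylvester

section main
variable {p d : ℕ}

noncomputable def Emat (hdp : d ≤ p) : Matrix (Fin p) (Fin d) ℝ :=
  (1 : Matrix (Fin p) (Fin p) ℝ).submatrix id (Fin.castLE hdp)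

lemma Emat_tmul (hdp : d ≤ p) : (Emat hdp)ᵀ * Emat hdp = 1 := by
  ext j k
  simp only [Emat, Matrix.mul_apply, Matrix.transpose_apply, Matrix.submatrix_apply, id_eq,
    Matrix.one_apply]
  rcases eq_or_ne j k with h | h
  · subst h
    rw [Finset.sum_eq_single (Fin.castLE hdp j)] <;> simp
  · rw [Finset.sum_eq_zero, if_neg h]
    intro i _
    rcases eq_or_ne i (Fin.castLE hdp j) with h2 | h2
    · subst h2
      have : ¬ (Fin.castLE hdp j = Fin.castLE hdp k) := by
        simpa [Fin.ext_iff] using h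
      simp [this]
    · simp [h2]

lemma trace_EEt (hdp : d ≤ p) :
    Matrix.trace (Emat hdp * (Emat hdp)ᵀ) = (d : ℝ) := by
  rw [Matrix.trace_mul_comm, Emat_tmul hdp]
  simp

lemma frobNorm_Emat (hdp : d ≤ p) : frobNorm (Emat hdp) = Real.sqrt d := by
  rw [frobNorm, trace_EEt hdp]

lemma frobNorm_EmatT (hdp : d ≤ p) : frobNorm (Emat hdp)ᵀ = Real.sqrt d := by
  rw [frobNorm, Matrix.transpose_transpose, Matrix.trace_mul_comm, trace_EEt hdp]

end main

section main2
variable {p d : ℕ}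

lemma frobNorm_u0 (hdp : d ≤ p) :
    frobNorm (Emat hdp * (Emat hdp)ᵀ) = Real.sqrt d := by
  rw [frobNorm]
  congr 1
  have : Emat hdp * (Emat hdp)ᵀ * (Emat hdp * (Emat hdp)ᵀ)ᵀ
      = Emat hdp * ((Emat hdp)ᵀ * Emat hdp) * (Emat hdp)ᵀ := by
    simp only [Matrix.transpose_mul, Matrix.transpose_transpose, Matrix.mul_assoc]
  rw [this, Emat_tmul hdp, Matrix.mul_one, trace_EEt hdp]

lemma X_sub (hdp : d ≤ p) (u v : Matrix (Fin p) (Fin p) ℝ) :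
    (Emat hdp)ᵀ * u * Emat hdp - (Emat hdp)ᵀ * v * Emat hdp
      = (Emat hdp)ᵀ * (u - v) * Emat hdp := by
  rw [Matrix.mul_sub, Matrix.sub_mul]

lemma X_diff (hdp : d ≤ p) (u v : Matrix (Fin p) (Fin p) ℝ) :
    frobNorm ((Emat hdp)ᵀ * u * Emat hdp - (Emat hdp)ᵀ * v * Emat hdp)
      ≤ d * frobNorm (u - v) := by
  rw [X_sub hdp]
  calc frobNorm ((Emat hdp)ᵀ * (u - v) * Emat hdp)
      ≤ frobNorm ((Emat hdp)ᵀ * (u - v)) * frobNorm (Emat hdp) := frobNorm_mul_le _ _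
    _ ≤ frobNorm (Emat hdp)ᵀ * frobNorm (u - v) * frobNorm (Emat hdp) :=
        mul_le_mul_of_nonneg_right (frobNorm_mul_le _ _) (frobNorm_nonneg _)
    _ = d * frobNorm (u - v) := by
        rw [frobNorm_Emat hdp, frobNorm_EmatT hdp]
        rw [show Real.sqrt d * frobNorm (u - v) * Real.sqrt d
          = (Real.sqrt d * Real.sqrt d) * frobNorm (u - v) by ring,
          Real.mul_self_sqrt (by positivity)]

lemma X_u0 (hdp : d ≤ p) :
    (Emat hdp)ᵀ * (Emat hdp * (Emat hdp)ᵀ) * Emat hdp = 1 := by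
  have : (Emat hdp)ᵀ * (Emat hdp * (Emat hdp)ᵀ) * Emat hdp
      = ((Emat hdp)ᵀ * Emat hdp) * ((Emat hdp)ᵀ * Emat hdp) := by
    simp only [Matrix.mul_assoc]
  rw [this, Emat_tmul hdp, Matrix.mul_one]

lemma X_close (hd : 1 ≤ d) (hdp : d ≤ p) {u : Matrix (Fin p) (Fin p) ℝ}
    (hW : frobNorm (u - Emat hdp * (Emat hdp)ᵀ) < 1/(2*d)) :
    frobNorm ((Emat hdp)ᵀ * u * Emat hdp - 1) ≤ 1/2 := by
  have hd0 : (0:ℝ) < d := by exact_mod_cast hd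
  have h1 : (Emat hdp)ᵀ * u * Emat hdp - 1
      = (Emat hdp)ᵀ * (u - Emat hdp * (Emat hdp)ᵀ) * Emat hdp := by
    rw [← X_sub hdp, X_u0 hdp]
  have h2 : frobNorm ((Emat hdp)ᵀ * u * Emat hdp - 1) ≤ d * frobNorm (u - Emat hdp * (Emat hdp)ᵀ) := by
    have := X_diff hdp u (Emat hdp * (Emat hdp)ᵀ)
    rwa [X_u0 hdp] at this
  calc frobNorm ((Emat hdp)ᵀ * u * Emat hdp - 1)
      ≤ d * frobNorm (u - Emat hdp * (Emat hdp)ᵀ) := h2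
    _ ≤ d * (1/(2*d)) := by
        apply mul_le_mul_of_nonneg_left (le_of_lt hW) (le_of_lt hd0)
    _ = 1/2 := by field_simp
  
lemma X_herm (hdp : d ≤ p) {u : Matrix (Fin p) (Fin p) ℝ} (hut : uᵀ = u) :
    ((Emat hdp)ᵀ * u * Emat hdp).IsHermitian := by
  show ((Emat hdp)ᵀ * u * Emat hdp)ᴴ = (Emat hdp)ᵀ * u * Emat hdp
  rw [Matrix.conjTranspose_eq_transpose_of_trivial]
  simp only [Matrix.transpose_mul, Matrix.transpose_transpose, hut, Matrix.mul_assoc]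

lemma grass_symm {u : Matrix (Fin p) (Fin p) ℝ} (hG : u ∈ grassmannian p d) : uᵀ = u := by
  obtain ⟨B, hB1, hB2⟩ := hG
  rw [← hB2]
  simp [Matrix.transpose_mul]

lemma grass_idem {u : Matrix (Fin p) (Fin p) ℝ} (hG : u ∈ grassmannian p d) : u * u = u := by
  obtain ⟨B, hB1, hB2⟩ := hG
  rw [← hB2]
  calc B * Bᵀ * (B * Bᵀ) = B * ((Bᵀ * B) * Bᵀ) := by simp only [Matrix.mul_assoc]
    _ = B * Bᵀ := by rw [hB1, Matrix.one_mul]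

/-- The lifted matrix has orthonormal columns and projects back to `u`. -/
lemma lift_good (hd : 1 ≤ d) (hdp : d ≤ p) {u : Matrix (Fin p) (Fin p) ℝ}
    (hG : u ∈ grassmannian p d)
    (hW : frobNorm (u - Emat hdp * (Emat hdp)ᵀ) < 1/(2*d)) :
    (u * Emat hdp * isq ((Emat hdp)ᵀ * u * Emat hdp))ᵀ
        * (u * Emat hdp * isq ((Emat hdp)ᵀ * u * Emat hdp)) = 1 ∧
    (u * Emat hdp * isq ((Emat hdp)ᵀ * u * Emat hdp))
        * (u * Emat hdp * isq ((Emat hdp)ᵀ * u * Emat hdp))ᵀ = u := by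
  set E := Emat hdp with hE
  set X := Eᵀ * u * E with hX
  have hut : uᵀ = u := grass_symm hG
  have huu : u * u = u := grass_idem hG
  have hXh : X.IsHermitian := X_herm hdp hut
  have hbX : frobNorm (X - 1) ≤ 1/2 := X_close hd hdp hW
  obtain ⟨Wm, a, hW1, hW2, haB, hisq, hHXH, hXP, hPX, hHn, hPn⟩ := isq_spec X hXh hbX
  set H := isq X with hH
  have Hsym : Hᵀ = H := by
    rw [hisq]
    simp only [Matrix.transpose_mul, Matrix.transpose_transpose, Matrix.diagonal_transpose,
      Matrix.mul_assoc]
  constructor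
  · have step : (u * E * H)ᵀ * (u * E * H) = H * ((Eᵀ * (u * u) * E) * H) := by
      rw [Matrix.transpose_mul, Matrix.transpose_mul, Hsym, hut]
      simp only [Matrix.mul_assoc]
    rw [step, huu, ← hX, ← Matrix.mul_assoc, hHXH]
  · obtain ⟨B, hB1, hB2⟩ := hG
    set N := Bᵀ * E with hN
    have hXN : X = Nᵀ * N := by
      rw [hX, ← hB2, hN]
      simp only [Matrix.transpose_mul, Matrix.transpose_transpose, Matrix.mul_assoc]
    have hdetN : N.det ≠ 0 := by
      have hXdet : IsUnit X.det := Matrix.isUnit_det_of_right_inverse hXP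
      rw [hXN, Matrix.det_mul, Matrix.det_transpose] at hXdet
      intro h
      rw [h, mul_zero] at hXdet
      exact hXdet.ne_zero rfl
    have hPinv : H * H = X⁻¹ := (Matrix.inv_eq_right_inv hXP).symm
    have key : N * (H * H) * Nᵀ = 1 := by
      rw [hPinv, hXN, Matrix.mul_inv_rev]
      have h1 : N * (N⁻¹ * (Nᵀ)⁻¹) * Nᵀ = (N * N⁻¹) * ((Nᵀ)⁻¹ * Nᵀ) := by
        simp only [Matrix.mul_assoc]
      rw [h1, Matrix.mul_nonsing_inv _ (isUnit_iff_ne_zero.mpr hdetN),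
        Matrix.nonsing_inv_mul _ (by rwa [Matrix.det_transpose, isUnit_iff_ne_zero]),
        Matrix.mul_one]
    have huE : u * E = B * N := by
      rw [← hB2, hN]; simp only [Matrix.mul_assoc]
    have hEu : Eᵀ * u = Nᵀ * Bᵀ := by
      rw [← hB2, hN]
      simp only [Matrix.transpose_mul, Matrix.transpose_transpose, Matrix.mul_assoc]
    calc (u * E * H) * (u * E * H)ᵀ = (u * E) * (H * H) * (Eᵀ * u) := by
          rw [Matrix.transpose_mul, Matrix.transpose_mul, Hsym, hut]
          simp only [Matrix.mul_assoc]
      _ = (B * N) * (H * H) * (Nᵀ * Bᵀ) := by rw [huE, hEu]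
      _ = B * (N * (H * H) * Nᵀ) * Bᵀ := by simp only [Matrix.mul_assoc]
      _ = B * Bᵀ := by rw [key, Matrix.mul_one]
      _ = u := hB2

end main2

section main3
variable {p d : ℕ}

lemma lift_lip (hd : 1 ≤ d) (hdp : d ≤ p) {u v : Matrix (Fin p) (Fin p) ℝ}
    (hGu : u ∈ grassmannian p d) (hWu : frobNorm (u - Emat hdp * (Emat hdp)ᵀ) < 1/(2*d))
    (hGv : v ∈ grassmannian p d) (hWv : frobNorm (v - Emat hdp * (Emat hdp)ᵀ) < 1/(2*d)) :
    frobNorm (u * Emat hdp * isq ((Emat hdp)ᵀ * u * Emat hdp)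
        - v * Emat hdp * isq ((Emat hdp)ᵀ * v * Emat hdp))
      ≤ (Real.sqrt d * Real.sqrt (2*d) + (1 + Real.sqrt d) * Real.sqrt d * (4*d) * d)
          * frobNorm (u - v) := by
  have hd0 : (0:ℝ) < d := by exact_mod_cast hd
  have hd1 : (1:ℝ) ≤ d := by exact_mod_cast hd
  set E := Emat hdp with hE
  set Xu := Eᵀ * u * E with hXu
  set Xv := Eᵀ * v * E with hXv
  set Hu := isq Xu with hHu
  set Hv := isq Xv with hHv
  have hXhu : Xu.IsHermitian := X_herm hdp (grass_symm hGu)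
  have hXhv : Xv.IsHermitian := X_herm hdp (grass_symm hGv)
  have hbXu : frobNorm (Xu - 1) ≤ 1/2 := X_close hd hdp hWu
  have hbXv : frobNorm (Xv - 1) ≤ 1/2 := X_close hd hdp hWv
  -- norm bounds for Hu
  obtain ⟨-, -, -, -, -, -, -, -, -, hHun, -⟩ := isq_spec Xu hXhu hbXu
  -- split
  have hsplit : u * E * Hu - v * E * Hv = (u - v) * E * Hu + v * E * (Hu - Hv) := by
    rw [Matrix.sub_mul, Matrix.sub_mul, Matrix.mul_sub]
    abel
  have hT := frobNorm_nonneg (u - v)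
  -- first term
  have h1 : frobNorm ((u - v) * E * Hu) ≤ frobNorm (u - v) * Real.sqrt d * Real.sqrt (2*d) := by
    calc frobNorm ((u - v) * E * Hu) ≤ frobNorm ((u - v) * E) * frobNorm Hu :=
          frobNorm_mul_le _ _
      _ ≤ frobNorm (u - v) * frobNorm E * frobNorm Hu :=
          mul_le_mul_of_nonneg_right (frobNorm_mul_le _ _) (frobNorm_nonneg _)
      _ ≤ frobNorm (u - v) * Real.sqrt d * Real.sqrt (2*d) := by
          rw [hE, frobNorm_Emat hdp]
          exact mul_le_mul_of_nonneg_left hHun (by positivity)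
  -- frobNorm v bound
  have hv : frobNorm v ≤ 1 + Real.sqrt d := by
    have : v = (v - E * Eᵀ) + E * Eᵀ := by abel
    calc frobNorm v = frobNorm ((v - E * Eᵀ) + E * Eᵀ) := by rw [← this]
      _ ≤ frobNorm (v - E * Eᵀ) + frobNorm (E * Eᵀ) := frobNorm_add_le _ _
      _ ≤ 1 + Real.sqrt d := by
          rw [hE, frobNorm_u0 hdp]
          have : frobNorm (v - Emat hdp * (Emat hdp)ᵀ) ≤ 1 := by
            have h12 : 1/(2*(d:ℝ)) ≤ 1 := by
              rw [div_le_one (by linarith)]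
              linarith
            linarith [hWv]
          linarith
  -- Hu - Hv bound
  have hHd : frobNorm (Hu - Hv) ≤ 4 * d * (d * frobNorm (u - v)) := by
    calc frobNorm (Hu - Hv) ≤ 4 * d * frobNorm (Xu - Xv) :=
          isq_diff hXhu hXhv hbXu hbXv
      _ ≤ 4 * d * (d * frobNorm (u - v)) := by
          apply mul_le_mul_of_nonneg_left _ (by positivity)
          rw [hXu, hXv]
          exact X_diff hdp u v
  -- second term
  have h2 : frobNorm (v * E * (Hu - Hv))
      ≤ (1 + Real.sqrt d) * Real.sqrt d * (4 * d * (d * frobNorm (u - v))) := by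
    calc frobNorm (v * E * (Hu - Hv)) ≤ frobNorm (v * E) * frobNorm (Hu - Hv) :=
          frobNorm_mul_le _ _
      _ ≤ frobNorm v * frobNorm E * frobNorm (Hu - Hv) :=
          mul_le_mul_of_nonneg_right (frobNorm_mul_le _ _) (frobNorm_nonneg _)
      _ ≤ (1 + Real.sqrt d) * Real.sqrt d * (4 * d * (d * frobNorm (u - v))) := by
          apply mul_le_mul
          · rw [hE, frobNorm_Emat hdp]
            exact mul_le_mul_of_nonneg_right hv (Real.sqrt_nonneg _)
          · exact hHd
          · exact frobNorm_nonneg _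
          · positivity
  calc frobNorm (u * E * Hu - v * E * Hv)
      = frobNorm ((u - v) * E * Hu + v * E * (Hu - Hv)) := by rw [hsplit]
    _ ≤ frobNorm ((u - v) * E * Hu) + frobNorm (v * E * (Hu - Hv)) := frobNorm_add_le _ _
    _ ≤ frobNorm (u - v) * Real.sqrt d * Real.sqrt (2*d)
          + (1 + Real.sqrt d) * Real.sqrt d * (4 * d * (d * frobNorm (u - v))) := by
        linarith [h1, h2]
    _ = (Real.sqrt d * Real.sqrt (2*d) + (1 + Real.sqrt d) * Real.sqrt d * (4*d) * d)
          * frobNorm (u - v) := by ring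

end main3


/-- For `1 ≤ d ≤ p` there exist a constant `C > 0` and a nonempty subset `U`
of `G(p,d)`, relatively open in `G(p,d)` (for the Frobenius-norm topology of `ℝ^{p×p}`),
such that for every `n` and every `u₁, ..., u_n ∈ U` there are `p×d` matrices `A₁, ..., A_n`
with orthonormal columns satisfying `AᵢAᵢᵀ = uᵢ` and
`‖Aᵢ − Aⱼ‖_F ≤ C‖uᵢ − uⱼ‖_F` for all `i, j`. -/
theorem exists_good_lift_on_open_subset_grassmannian (p d : ℕ) (hd : 1 ≤ d) (hdp : d ≤ p) :
    ∃ C : ℝ, 0 < C ∧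
      ∃ U : Set (Matrix (Fin p) (Fin p) ℝ),
        U.Nonempty ∧ U ⊆ grassmannian p d ∧
        (∃ W : Set (Matrix (Fin p) (Fin p) ℝ), IsOpen W ∧ U = W ∩ grassmannian p d) ∧
        ∀ (n : ℕ) (u : Fin n → Matrix (Fin p) (Fin p) ℝ), (∀ i, u i ∈ U) →
          ∃ A : Fin n → Matrix (Fin p) (Fin d) ℝ,
            (∀ i, (A i)ᵀ * A i = 1 ∧ A i * (A i)ᵀ = u i) ∧
            ∀ i j, frobNorm (A i - A j) ≤ C * frobNorm (u i - u j) := by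

  have hd0 : (0:ℝ) < d := by exact_mod_cast hd
  set E : Matrix (Fin p) (Fin d) ℝ := Emat hdp with hE
  set u0 : Matrix (Fin p) (Fin p) ℝ := E * Eᵀ with hu0
  set ε : ℝ := 1/(2*d) with hε
  have hεpos : 0 < ε := by rw [hε]; positivity
  set C : ℝ := Real.sqrt d * Real.sqrt (2*d) + (1 + Real.sqrt d) * Real.sqrt d * (4*d) * d
    with hC
  have hCpos : 0 < C := by
    have h1 : 0 < Real.sqrt (d:ℝ) := Real.sqrt_pos.mpr hd0
    have h2 : 0 < Real.sqrt (2*(d:ℝ)) := Real.sqrt_pos.mpr (by linarith)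
    have h3 : 0 ≤ (1 + Real.sqrt (d:ℝ)) * Real.sqrt (d:ℝ) * (4*(d:ℝ)) * d := by positivity
    rw [hC]
    nlinarith
  set Wset : Set (Matrix (Fin p) (Fin p) ℝ) := {x | frobNorm (x - u0) < ε} with hWset
  refine ⟨C, hCpos, Wset ∩ grassmannian p d, ⟨u0, ?_, ?_⟩, Set.inter_subset_right,
    ⟨Wset, ?_, rfl⟩, ?_⟩
  · show frobNorm (u0 - u0) < ε
    rw [sub_self]
    have : frobNorm (0 : Matrix (Fin p) (Fin p) ℝ) = 0 := by
      simp [frobNorm_eq]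
    rw [this]; exact hεpos
  · exact ⟨E, Emat_tmul hdp, rfl⟩
  · have hcont : Continuous fun x : Matrix (Fin p) (Fin p) ℝ => frobNorm (x - u0) := by
      unfold frobNorm
      apply Real.continuous_sqrt.comp
      apply Continuous.matrix_trace
      exact Continuous.matrix_mul (continuous_id.sub continuous_const)
        ((continuous_id.sub continuous_const).matrix_transpose)
    have : Wset = (fun x : Matrix (Fin p) (Fin p) ℝ => frobNorm (x - u0)) ⁻¹' Set.Iio ε := rfl
    rw [this]
    exact isOpen_Iio.preimage hcont
  · intro n u hu
    refine ⟨fun i => (u i) * E * isq (Eᵀ * (u i) * E), fun i => ?_, fun i j => ?_⟩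
    · exact lift_good hd hdp (hu i).2 (hu i).1
    · calc frobNorm ((u i) * E * isq (Eᵀ * (u i) * E) - (u j) * E * isq (Eᵀ * (u j) * E))
          ≤ (Real.sqrt d * Real.sqrt (2*d) + (1 + Real.sqrt d) * Real.sqrt d * (4*d) * d)
            * frobNorm (u i - u j) :=
            lift_lip hd hdp (hu i).2 (hu i).1 (hu j).2 (hu j).1
        _ = C * frobNorm (u i - u j) := by rw [hC]
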